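/- For every positive integer n, the sum over k from 0 to n-1 of 1/(1 + 2·sin²(kπ/n)) equals 2n·G_n²/(G_{2n} − 2·G_n), where G is defined by G₀ = 0, G₁ = 1, G_{n+2} = 4G_{n+1} − G_n. -/

import Mathlib

/-!
With `α = 2 + √3` (so `α + α⁻¹ = 4` and `α - α⁻¹ = 2√3`) Binet's formula reads
`G n = (αⁿ - α⁻ⁿ) / (2√3)`, and since `1 + 2 sin² t = (α + α⁻¹ - 2 cos 2t) / 2` the sum is
`1/√3` times a Poisson kernel sum `∑ₖ (α - α⁻¹) / (α + α⁻¹ - 2 cos (2πk/n))`. Splitting the Poisson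
kernel as `α / (α - ζᵏ) - α⁻¹ / (α⁻¹ - ζᵏ)` over the `n`-th roots of unity `ζᵏ` and using the
logarithmic derivative of `Xⁿ - 1` evaluates it as `n (αⁿ + 1) / (αⁿ - 1)`.
With `a = αⁿ` both sides of the identity become `n (a + 1) / (√3 (a - 1))`.
-/

def G : ℕ → ℤ
  | 0 => 0
  | 1 => 1
  | n + 2 => 4 * G (n + 1) - G n

open Finset Real

theorem IsPrimitiveRoot.sum_one_div_sub_pow {K : Type*} [Field K] {ζ : K} {n : ℕ}
    (hζ : IsPrimitiveRoot ζ n) {x : K} (hx : x ^ n ≠ 1) :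
    ∑ k ∈ range n, 1 / (x - ζ ^ k) = n * x ^ (n - 1) / (x ^ n - 1) := by
  have h := (Polynomial.X_pow_sub_one_splits hζ).eval_derivative_div_eval_of_ne_zero (x := x)
    (by simpa [sub_eq_zero] using hx)
  rw [← Polynomial.nthRoots, hζ.nthRoots_eq (one_pow n)] at h
  simpa [Polynomial.derivative_X_pow, Finset.sum] using h.symm

theorem IsPrimitiveRoot.sum_div_sub_pow {K : Type*} [Field K] {ζ : K} {n : ℕ}
    (hζ : IsPrimitiveRoot ζ n) {x : K} (hx : x ^ n ≠ 1) :
    ∑ k ∈ range n, x / (x - ζ ^ k) = n * x ^ n / (x ^ n - 1) := by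
  have hn : n ≠ 0 := by rintro rfl; exact hx (pow_zero x)
  simp_rw [div_eq_mul_one_div x, ← mul_sum, hζ.sum_one_div_sub_pow hx, ← mul_pow_sub_one hn x]
  ring

theorem div_sub_div_eq_of_mul_eq_one {K : Type*} [Field K] {x y t : K} (hxy : x * y = 1)
    (ht : t ≠ 0) (hx : x ≠ t) (hy : y ≠ t) :
    x / (x - t) - y / (y - t) = (x - y) / (x + y - (t + t⁻¹)) := by
  have hden : x + y - (t + t⁻¹) = -((x - t) * (y - t)) / t := by
    rw [eq_div_iff ht]
    field_simp
    linear_combination hxy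
  rw [hden, div_sub_div _ _ (sub_ne_zero.2 hx) (sub_ne_zero.2 hy)]
  field_simp
  ring

theorem Complex.exp_ofReal_mul_I_add_inv (θ : ℝ) :
    exp (θ * I) + (exp (θ * I))⁻¹ = 2 * Real.cos θ := by
  rw [← exp_neg, ← neg_mul, ofReal_cos, two_cos]

theorem sum_div_add_inv_sub_two_mul_cos {n : ℕ} {x : ℝ} (hx : x ≠ 0) (hxn : x ^ n ≠ 1) :
    ∑ k ∈ range n, (x - x⁻¹) / (x + x⁻¹ - 2 * cos (2 * π * k / n)) =
      n * (x ^ n + 1) / (x ^ n - 1) := by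
  have hn : n ≠ 0 := by rintro rfl; exact hxn (pow_zero x)
  have hζ := Complex.isPrimitiveRoot_exp n hn
  set ζ := Complex.exp (2 * π * Complex.I / n)
  have hne_pow (k : ℕ) (y : ℂ) (hy : y ^ n ≠ 1) : y ≠ ζ ^ k := by
    rintro rfl
    exact hy (by rw [← pow_mul, mul_comm, pow_mul, hζ.pow_eq_one, one_pow])
  have hxn' : (x : ℂ) ^ n ≠ 1 := by exact_mod_cast hxn
  have hxn_inv : (x : ℂ)⁻¹ ^ n ≠ 1 := by rwa [inv_pow, inv_ne_one]
  have hterm (k : ℕ) : (((x - x⁻¹) / (x + x⁻¹ - 2 * cos (2 * π * k / n)) : ℝ) : ℂ) =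
      x / (x - ζ ^ k) - (x : ℂ)⁻¹ / ((x : ℂ)⁻¹ - ζ ^ k) := by
    have hcos : ζ ^ k + (ζ ^ k)⁻¹ = 2 * cos (2 * π * k / n) := by
      rw [← Complex.exp_ofReal_mul_I_add_inv, ← Complex.exp_nat_mul]
      push_cast
      ring_nf
    rw [div_sub_div_eq_of_mul_eq_one (mul_inv_cancel₀ (by exact_mod_cast hx))
      (pow_ne_zero _ (hζ.ne_zero hn)) (hne_pow k _ hxn') (hne_pow k _ hxn_inv), hcos]
    push_cast
    rfl
  apply Complex.ofReal_injective
  rw [Complex.ofReal_sum]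
  simp_rw [hterm]
  push_cast
  rw [sum_sub_distrib, hζ.sum_div_sub_pow hxn', hζ.sum_div_sub_pow hxn_inv, inv_pow]
  have hx0 : (x : ℂ) ^ n ≠ 0 := pow_ne_zero _ (by exact_mod_cast hx)
  have hx1 : (x : ℂ) ^ n - 1 ≠ 0 := sub_ne_zero.2 hxn'
  field_simp
  ring

theorem G_mul_sub_eq_pow_sub_pow {R : Type*} [CommRing R] {α β : R} (hsum : α + β = 4)
    (hprod : α * β = 1) (n : ℕ) : (G n : R) * (α - β) = α ^ n - β ^ n := by
  induction n using G.induct with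
  | case1 => simp [G]
  | case2 => simp [G]
  | case3 n ih₁ ih₀ =>
    simp only [G, Nat.succ_eq_add_one]
    push_cast
    linear_combination 4 * ih₁ - ih₀ - (α ^ (n + 1) - β ^ (n + 1)) * hsum + (α ^ n - β ^ n) * hprod

theorem stmt_5 (n : ℕ) (hn : 0 < n) :
    ∑ k ∈ Finset.range n, (1 : ℝ) / (1 + 2 * Real.sin (k * Real.pi / n) ^ 2) =
      2 * n * (G n : ℝ) ^ 2 / ((G (2 * n) : ℝ) - 2 * (G n : ℝ)) := by
  obtain ⟨α, hα1, hadd, hdiff⟩ : ∃ α : ℝ, 1 < α ∧ α + α⁻¹ = 4 ∧ α - α⁻¹ = 2 * √3 := by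
    have hs : √3 ^ 2 = 3 := sq_sqrt (by norm_num)
    have hinv : (2 + √3)⁻¹ = 2 - √3 := inv_eq_of_mul_eq_one_right (by linear_combination -hs)
    refine ⟨2 + √3, by linarith [sqrt_nonneg 3], by rw [hinv]; ring, by rw [hinv]; ring⟩
  have hbinet (m : ℕ) : (G m : ℝ) = (α ^ m - (α ^ m)⁻¹) / (2 * √3) := by
    rw [eq_div_iff (by positivity), ← hdiff,
      G_mul_sub_eq_pow_sub_pow hadd (mul_inv_cancel₀ (by positivity)), inv_pow]
  have hterm (k : ℕ) : 1 / (1 + 2 * sin (k * π / n) ^ 2) =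
      (√3)⁻¹ * ((α - α⁻¹) / (α + α⁻¹ - 2 * cos (2 * π * k / n))) := by
    rw [show 2 * π * k / n = 2 * (k * π / n) by ring, cos_two_mul_eq_one_sub, hadd, hdiff,
      show 4 - 2 * (1 - 2 * sin (k * π / n) ^ 2) = 2 * (1 + 2 * sin (k * π / n) ^ 2) by ring]
    field_simp
  have ha1 : 1 < α ^ n := one_lt_pow₀ hα1 hn.ne'
  rw [sum_congr rfl fun k _ => hterm k, ← mul_sum,
    sum_div_add_inv_sub_two_mul_cos (by positivity) ha1.ne', hbinet, hbinet, pow_mul']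
  generalize α ^ n = a at ha1 ⊢
  have ha0 : a ≠ 0 := by positivity
  have ha1' : a - 1 ≠ 0 := by linarith
  have hden : (a ^ 2 - (a ^ 2)⁻¹) / (2 * √3) - 2 * ((a - a⁻¹) / (2 * √3)) =
      (a - 1) ^ 3 * (a + 1) / (2 * √3 * a ^ 2) := by
    field_simp
    ring
  rw [hden]
  field_simp
  ring
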